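/- arXiv:1604.06037 — 10 statements merged into one kernel-verified Lean document; each statement's English description precedes it below -/
import Mathlib

section
/- In any pseudo equality algebra A, for all x, y ∈ A: y ≤ ((x∧y ∼ x) ∽ y), i.e., y is below x ∨₁ y, and likewise y ≤ y ∼ (x ∽ x∧y), i.e., y is below x ∨₂ y. -/
/-- A pseudo equality algebra (JK-algebra). -/
structure PEA (A : Type*) where
  meet : A → A → A
  sim : A → A → A      -- x ∼ y
  bsim : A → A → A     -- x ∽ y
  one : A
  meet_comm : ∀ x y, meet x y = meet y x
  meet_assoc : ∀ x y z, meet (meet x y) z = meet x (meet y z)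
  meet_idem : ∀ x, meet x x = x
  meet_one : ∀ x, meet x one = x                      -- 1 is top
  sim_self : ∀ x, sim x x = one                       -- (A2)
  bsim_self : ∀ x, bsim x x = one
  sim_one : ∀ x, sim x one = x                        -- (A3)
  one_bsim : ∀ x, bsim one x = x
  A4a : ∀ x y z, meet x y = x → meet y z = y → meet (sim x z) (sim y z) = sim x z
  A4b : ∀ x y z, meet x y = x → meet y z = y → meet (sim x z) (sim x y) = sim x z
  A4c : ∀ x y z, meet x y = x → meet y z = y → meet (bsim z x) (bsim z y) = bsim z x
  A4d : ∀ x y z, meet x y = x → meet y z = y → meet (bsim z x) (bsim y x) = bsim z x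
  A5a : ∀ x y z, meet (sim x y) (sim (meet x z) (meet y z)) = sim x y
  A5b : ∀ x y z, meet (bsim x y) (bsim (meet x z) (meet y z)) = bsim x y
  A6a : ∀ x y z, meet (sim x y) (bsim (sim z x) (sim z y)) = sim x y
  A6b : ∀ x y z, meet (bsim x y) (sim (bsim x z) (bsim y z)) = bsim x y
  A7a : ∀ x y z, meet (sim x y) (sim (sim x z) (sim y z)) = sim x y
  A7b : ∀ x y z, meet (bsim x y) (bsim (bsim z x) (bsim z y)) = bsim x y

namespace PEA

variable {A : Type*}

/-- The induced order: x ≤ y iff x ∧ y = x. -/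
def le (P : PEA A) (x y : A) : Prop := P.meet x y = x

/-- x ∨₁ y = (x∧y ∼ x) ∽ y. -/
def v1 (P : PEA A) (x y : A) : A := P.bsim (P.sim (P.meet x y) x) y

/-- x ∨₂ y = y ∼ (x ∽ x∧y). -/
def v2 (P : PEA A) (x y : A) : A := P.sim y (P.bsim x (P.meet x y))

/-- x → y = x∧y ∼ x. -/
def arrow (P : PEA A) (x y : A) : A := P.sim (P.meet x y) x

/-- x ⇝ y = x ∽ x∧y. -/
def squig (P : PEA A) (x y : A) : A := P.bsim x (P.meet x y)

/-- Invariance: x∧y ∼ y = x ∼ y and x ∽ x∧y = x ∽ y. -/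
def Invariant (P : PEA A) : Prop :=
  ∀ x y, P.sim (P.meet x y) y = P.sim x y ∧ P.bsim x (P.meet x y) = P.bsim x y

/-- Commutativity: (x∧y∼x)∽y = (x∧y∼y)∽x and y∼(x∽x∧y) = x∼(y∽x∧y). -/
def Commutative (P : PEA A) : Prop :=
  ∀ x y, P.bsim (P.sim (P.meet x y) x) y = P.bsim (P.sim (P.meet x y) y) x ∧
    P.sim y (P.bsim x (P.meet x y)) = P.sim x (P.bsim y (P.meet x y))

/-- D is an upset. -/
def IsUpset (P : PEA A) (D : Set A) : Prop := ∀ x y, x ∈ D → P.le x y → y ∈ D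

/-- Deductive system. -/
def IsDS (P : PEA A) (D : Set A) : Prop :=
  P.one ∈ D ∧ P.IsUpset D ∧ ∀ x y, x ∈ D → P.sim y x ∈ D → y ∈ D

/-- Commutative deductive system. -/
def IsCommDS (P : PEA A) (D : Set A) : Prop :=
  P.IsDS D ∧
  (∀ x y, P.sim (P.meet x y) y ∈ D → P.sim x (P.bsim (P.sim (P.meet x y) x) y) ∈ D) ∧
  (∀ x y, P.bsim y (P.meet x y) ∈ D → P.bsim (P.sim y (P.bsim x (P.meet x y))) x ∈ D)

/-- Normal deductive system. -/
def IsNormalDS (P : PEA A) (D : Set A) : Prop :=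
  P.IsDS D ∧ ∀ x y, (P.sim x y ∈ D ∧ P.sim y x ∈ D) ↔ (P.bsim y x ∈ D ∧ P.bsim x y ∈ D)

/-- Measure: m(y∼x) = m(x∽y) = m(y) − m(x) whenever y ≤ x, with values in [0,∞). -/
def IsMeasure (P : PEA A) (m : A → ℝ) : Prop :=
  (∀ x, 0 ≤ m x) ∧
  ∀ x y, P.le y x → m (P.sim y x) = m y - m x ∧ m (P.bsim x y) = m y - m x

end PEA

theorem stmt0 {A : Type*} (P : PEA A) (x y : A) :
    P.le y (P.v1 x y) ∧ P.le y (P.v2 x y) := by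
  -- y ≤ (x∧y ∼ x)
  have h1 : P.meet y (P.sim (P.meet x y) x) = y := by
    have := P.A5a y P.one x
    rw [P.sim_one, P.meet_comm P.one x, P.meet_one, P.meet_comm y x] at this
    exact this
  -- y ≤ (x ∽ x∧y)
  have h2 : P.meet y (P.bsim x (P.meet x y)) = y := by
    have := P.A5b P.one y x
    rw [P.one_bsim, P.meet_comm P.one x, P.meet_one, P.meet_comm y x] at this
    exact this
  constructor
  · have := P.A4d y (P.sim (P.meet x y) x) P.one h1
      (P.meet_one (P.sim (P.meet x y) x))
    rw [P.one_bsim] at this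
    exact this
  · have := P.A4b y (P.bsim x (P.meet x y)) P.one h2
      (P.meet_one (P.bsim x (P.meet x y)))
    rw [P.sim_one] at this
    exact this
end

section
/- In any pseudo equality algebra A, if x₁ ≤ x₂ then x₁ ∨₁ y ≤ x₂ ∨₁ y and x₁ ∨₂ y ≤ x₂ ∨₂ y, for all y ∈ A. -/
theorem stmt1 {A : Type*} (P : PEA A) (x₁ x₂ y : A) (h : P.le x₁ x₂) :
    P.le (P.v1 x₁ y) (P.v1 x₂ y) ∧ P.le (P.v2 x₁ y) (P.v2 x₂ y) := by
  unfold PEA.le PEA.v1 PEA.v2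
  unfold PEA.le at h
  -- basic meet facts
  have m1 : P.meet x₂ x₁ = x₁ := by rw [P.meet_comm]; exact h
  have m2 : P.meet (P.meet x₂ y) x₁ = P.meet x₁ y := by
    rw [P.meet_comm, ← P.meet_assoc, h]
  -- a₂ ≤ a₁ where aᵢ = (xᵢ∧y ∼ xᵢ)
  have h1 : P.meet (P.sim (P.meet x₂ y) x₂) (P.sim (P.meet x₁ y) x₁)
      = P.sim (P.meet x₂ y) x₂ := by
    have := P.A5a (P.meet x₂ y) x₂ x₁
    rwa [m2, m1] at this
  -- y ≤ a₂
  have h2 : P.meet y (P.sim (P.meet x₂ y) x₂) = y := by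
    have := P.A5a y P.one x₂
    rwa [P.sim_one, P.meet_comm y x₂, P.meet_comm P.one x₂, P.meet_one] at this
  constructor
  · exact P.A4d y (P.sim (P.meet x₂ y) x₂) (P.sim (P.meet x₁ y) x₁) h2 h1
  · -- s₂ ≤ s₁ where sᵢ = xᵢ ∽ xᵢ∧y
    have h3 : P.meet (P.bsim x₂ (P.meet x₂ y)) (P.bsim x₁ (P.meet x₁ y))
        = P.bsim x₂ (P.meet x₂ y) := by
      have := P.A5b x₂ (P.meet x₂ y) x₁
      rwa [m2, m1] at this
    -- y ≤ s₂
    have h4 : P.meet y (P.bsim x₂ (P.meet x₂ y)) = y := by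
      have := P.A5b P.one y x₂
      rwa [P.one_bsim, P.meet_comm y x₂, P.meet_comm P.one x₂, P.meet_one] at this
    exact P.A4b y (P.bsim x₂ (P.meet x₂ y)) (P.bsim x₁ (P.meet x₁ y)) h4 h3
end

section
/- In any pseudo equality algebra A, for all x, y ∈ A: y ∼ (x ∨₁ y) = x∧y ∼ x and (x ∨₂ y) ∽ y = x ∽ x∧y, where x ∨₁ y = (x∧y ∼ x) ∽ y and x ∨₂ y = y ∼ (x ∽ x∧y). -/
private lemma PEA.le_trans' {A : Type*} (P : PEA A) {x y z : A}
    (h1 : P.meet x y = x) (h2 : P.meet y z = y) : P.meet x z = x := by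
  conv_lhs => rw [← h1]
  rw [P.meet_assoc, h2, h1]

theorem stmt2 {A : Type*} (P : PEA A) (x y : A) :
    P.sim y (P.v1 x y) = P.sim (P.meet x y) x ∧
    P.bsim (P.v2 x y) y = P.bsim x (P.meet x y) := by
  constructor
  · -- a := sim (x∧y) x ; goal : sim y (bsim a y) = a
    -- h2 : y ≤ a
    have h2 : P.meet y (P.sim (P.meet x y) x) = y := by
      have h := P.A5a y P.one x
      rw [P.sim_one, P.meet_comm P.one x, P.meet_one, P.meet_comm y x] at h
      exact h
    -- h3 : x ≤ bsim a (x∧y)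
    have h3 : P.meet x (P.bsim (P.sim (P.meet x y) x) (P.meet x y)) = x := by
      have h := P.A6a x P.one (P.meet x y)
      rw [P.sim_one, P.sim_one] at h
      exact h
    -- h4 : bsim a (x∧y) ≤ bsim a y
    have hmy : P.meet (P.meet x y) y = P.meet x y := by
      rw [P.meet_assoc, P.meet_idem]
    have h4 := P.A4c (P.meet x y) y (P.sim (P.meet x y) x) hmy h2
    -- h5 : x ≤ bsim a y
    have h5 : P.meet x (P.bsim (P.sim (P.meet x y) x) y) = x :=
      P.le_trans' h3 h4
    -- upper : sim y (bsim a y) ≤ a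
    have hup : P.meet (P.sim y (P.bsim (P.sim (P.meet x y) x) y))
        (P.sim (P.meet x y) x) = P.sim y (P.bsim (P.sim (P.meet x y) x) y) := by
      have h := P.A5a y (P.bsim (P.sim (P.meet x y) x) y) x
      rw [P.meet_comm y x] at h
      rw [P.meet_comm (P.bsim (P.sim (P.meet x y) x) y) x, h5] at h
      exact h
    -- lower : a ≤ sim y (bsim a y)
    have hlo : P.meet (P.sim (P.meet x y) x)
        (P.sim y (P.bsim (P.sim (P.meet x y) x) y)) = P.sim (P.meet x y) x := by
      have h := P.A6b P.one (P.sim (P.meet x y) x) y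
      rw [P.one_bsim, P.one_bsim] at h
      exact h
    show P.sim y (P.bsim (P.sim (P.meet x y) x) y) = P.sim (P.meet x y) x
    rw [← hup, P.meet_comm, hlo]
  · -- b := bsim x (x∧y) ; goal : bsim (sim y b) y = b
    have h2 : P.meet y (P.bsim x (P.meet x y)) = y := by
      have h := P.A5b P.one y x
      rw [P.one_bsim, P.meet_comm P.one x, P.meet_one, P.meet_comm y x] at h
      exact h
    have h3 : P.meet x (P.sim (P.meet x y) (P.bsim x (P.meet x y))) = x := by
      have h := P.A6b P.one x (P.meet x y)
      rw [P.one_bsim, P.one_bsim] at h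
      exact h
    have hmy : P.meet (P.meet x y) y = P.meet x y := by
      rw [P.meet_assoc, P.meet_idem]
    have h4 := P.A4a (P.meet x y) y (P.bsim x (P.meet x y)) hmy h2
    have h5 : P.meet x (P.sim y (P.bsim x (P.meet x y))) = x :=
      P.le_trans' h3 h4
    have hup : P.meet (P.bsim (P.sim y (P.bsim x (P.meet x y))) y)
        (P.bsim x (P.meet x y)) = P.bsim (P.sim y (P.bsim x (P.meet x y))) y := by
      have h := P.A5b (P.sim y (P.bsim x (P.meet x y))) y x
      rw [P.meet_comm (P.sim y (P.bsim x (P.meet x y))) x, h5,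
        P.meet_comm y x] at h
      exact h
    have hlo : P.meet (P.bsim x (P.meet x y))
        (P.bsim (P.sim y (P.bsim x (P.meet x y))) y) = P.bsim x (P.meet x y) := by
      have h := P.A6a (P.bsim x (P.meet x y)) P.one y
      rw [P.sim_one, P.sim_one] at h
      exact h
    show P.bsim (P.sim y (P.bsim x (P.meet x y))) y = P.bsim x (P.meet x y)
    rw [← hup, P.meet_comm, hlo]
end

section
/- In any pseudo equality algebra A, the following hold for all x, y ∈ A: (1) x ≤ x ∼ ((x∧y ∼ x) ∽ y) and x ≤ ((x∧y ∼ x) ∽ y) ∽ x; (2) x ≤ x ∼ (y ∼ (x ∽ x∧y)) and x ≤ (y ∼ (x ∽ x∧y)) ∽ x. -/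
namespace PEA

variable {A : Type*} (P : PEA A)

lemma one_meet' (x : A) : P.meet P.one x = x := by
  rw [P.meet_comm]; exact P.meet_one x

lemma le_trans'_s3 {x y z : A} (h1 : P.le x y) (h2 : P.le y z) : P.le x z := by
  unfold le at *
  rw [← h1, P.meet_assoc, h2, h1]

lemma meet_le_right' (x y : A) : P.le (P.meet x y) y := by
  unfold le
  rw [P.meet_assoc, P.meet_idem]

lemma le_sim_of_le' {x z : A} (h : P.le x z) : P.le x (P.sim x z) := by
  have h2 := P.A4b x z P.one h (P.meet_one z)
  rwa [P.sim_one] at h2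

lemma le_bsim_of_le' {x z : A} (h : P.le x z) : P.le x (P.bsim z x) := by
  have h2 := P.A4d x z P.one h (P.meet_one z)
  rwa [P.one_bsim] at h2

lemma le_v1' (x y : A) : P.le x (P.v1 x y) := by
  have hy_a : P.le y (P.sim (P.meet x y) x) := by
    have h := P.A5a y P.one x
    rwa [P.sim_one, P.one_meet', P.meet_comm y x] at h
  have h2 : P.le x (P.bsim (P.sim (P.meet x y) x) (P.meet x y)) := by
    have h := P.A6a x P.one (P.meet x y)
    rwa [P.sim_one, P.sim_one] at h
  have h3 := P.A4c (P.meet x y) y (P.sim (P.meet x y) x) (P.meet_le_right' x y) hy_a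
  exact P.le_trans'_s3 h2 h3

lemma le_v2' (x y : A) : P.le x (P.v2 x y) := by
  have hy_b : P.le y (P.bsim x (P.meet x y)) := by
    have h := P.A5b P.one y x
    rwa [P.one_bsim, P.one_meet', P.meet_comm y x] at h
  have h2 : P.le x (P.sim (P.meet x y) (P.bsim x (P.meet x y))) := by
    have h := P.A6b P.one x (P.meet x y)
    rwa [P.one_bsim, P.one_bsim] at h
  have h3 := P.A4a (P.meet x y) y (P.bsim x (P.meet x y)) (P.meet_le_right' x y) hy_b
  exact P.le_trans'_s3 h2 h3

end PEA

theorem stmt3 {A : Type*} (P : PEA A) (x y : A) :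
    P.le x (P.sim x (P.v1 x y)) ∧ P.le x (P.bsim (P.v1 x y) x) ∧
    P.le x (P.sim x (P.v2 x y)) ∧ P.le x (P.bsim (P.v2 x y) x) :=
  ⟨P.le_sim_of_le' (P.le_v1' x y), P.le_bsim_of_le' (P.le_v1' x y),
   P.le_sim_of_le' (P.le_v2' x y), P.le_bsim_of_le' (P.le_v2' x y)⟩
end

section
/- A subset D of a pseudo equality algebra A is a deductive system (i.e., 1 ∈ D, D is an upset, and x ∈ D together with y∼x ∈ D imply y ∈ D) if and only if D satisfies: 1 ∈ D, D is an upset, and for all x, y ∈ A, if x ∈ D and x∧y ∼ x ∈ D then y ∈ D. -/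
lemma PEA.sim_le_meet_sim {A : Type*} (P : PEA A) (x y : A) :
    P.meet (P.sim y x) (P.sim (P.meet x y) x) = P.sim y x := by
  have h := P.A5a y x x
  rw [P.meet_idem, P.meet_comm y x] at h
  exact h

theorem stmt4 {A : Type*} (P : PEA A) (D : Set A) :
    P.IsDS D ↔
      (P.one ∈ D ∧ P.IsUpset D ∧
        ∀ x y, x ∈ D → P.sim (P.meet x y) x ∈ D → y ∈ D) := by
  constructor
  · rintro ⟨h1, hu, hd⟩
    refine ⟨h1, hu, fun x y hx hs => ?_⟩
    have hxy : P.meet x y ∈ D := hd x (P.meet x y) hx hs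
    exact hu _ y hxy (by rw [PEA.le, P.meet_assoc, P.meet_idem])
  · rintro ⟨h1, hu, hd⟩
    refine ⟨h1, hu, fun x y hx hs => ?_⟩
    exact hd x y hx (hu _ _ hs (P.sim_le_meet_sim x y))
end

section
/- An invariant pseudo equality algebra A is commutative if and only if its corresponding pseudo BCK-structure, with operations x → y = x∧y ∼ x and x ⇝ y = x ∽ x∧y, is commutative, i.e., (x→y)⇝y = (y→x)⇝x and (x⇝y)→y = (y⇝x)→x for all x, y ∈ A. -/
theorem stmt5 {A : Type*} (P : PEA A) (hinv : P.Invariant) :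
    P.Commutative ↔
      ∀ x y, P.squig (P.arrow x y) y = P.squig (P.arrow y x) x ∧
        P.arrow (P.squig x y) y = P.arrow (P.squig y x) x := by
  have h1 : ∀ a b, P.squig a b = P.bsim a b := fun a b => (hinv a b).2
  have h2 : ∀ a b, P.arrow a b = P.sim b a := fun a b => by
    unfold PEA.arrow; rw [P.meet_comm]; exact (hinv b a).1
  have key : ∀ x y,
      (P.squig (P.arrow x y) y = P.squig (P.arrow y x) x ↔
        P.bsim (P.sim (P.meet x y) x) y = P.bsim (P.sim (P.meet x y) y) x) ∧
      (P.arrow (P.squig x y) y = P.arrow (P.squig y x) x ↔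
        P.sim y (P.bsim x (P.meet x y)) = P.sim x (P.bsim y (P.meet x y))) := by
    intro x y
    constructor
    · rw [h1, h1]
      unfold PEA.arrow
      rw [P.meet_comm y x]
    · rw [h2, h2, h1, h1, ← (hinv x y).2, ← (hinv y x).2, P.meet_comm y x]
  constructor
  · intro hc x y
    exact ⟨((key x y).1).mpr (hc x y).1, ((key x y).2).mpr (hc x y).2⟩
  · intro h x y
    exact ⟨((key x y).1).mp (h x y).1, ((key x y).2).mp (h x y).2⟩
end

section
/- An upset D of a pseudo equality algebra A is a commutative deductive system if and only if: 1 ∈ D; for all x, y, z ∈ A, (x∧y∼y)∧z ∼ z ∈ D and z ∈ D imply x∼((x∧y∼x)∽y) ∈ D; and z ∽ (y∽x∧y)∧z ∈ D and z ∈ D imply (y∼(x∽x∧y))∽x ∈ D. -/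
-- auxiliary lemmas

/-- meet a z ≤ z -/
lemma PEA.le_meet_right {A : Type*} (P : PEA A) (a z : A) : P.le (P.meet a z) z := by
  unfold PEA.le
  rw [P.meet_assoc, P.meet_idem]

/-- meet a z ≤ a -/
lemma PEA.le_meet_left {A : Type*} (P : PEA A) (a z : A) : P.le (P.meet a z) a := by
  unfold PEA.le
  rw [P.meet_comm a z, P.meet_assoc, P.meet_idem]

/-- A deductive system is closed under bsim-modus-ponens. -/
lemma PEA.bsim_mp {A : Type*} (P : PEA A) (D : Set A) (hD : P.IsDS D) :
    ∀ x y, x ∈ D → P.bsim x y ∈ D → y ∈ D := by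
  intro x y hx hb
  have h := P.A6b P.one x y
  rw [P.one_bsim, P.one_bsim] at h
  have hle : P.le x (P.sim y (P.bsim x y)) := h
  have hs : P.sim y (P.bsim x y) ∈ D := hD.2.1 _ _ hx hle
  exact hD.2.2 (P.bsim x y) y hb hs

theorem stmt11 {A : Type*} (P : PEA A) (D : Set A) (hup : P.IsUpset D) :
    P.IsCommDS D ↔
      (P.one ∈ D ∧
        (∀ x y z, P.sim (P.meet (P.sim (P.meet x y) y) z) z ∈ D → z ∈ D →
          P.sim x (P.bsim (P.sim (P.meet x y) x) y) ∈ D) ∧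
        (∀ x y z, P.bsim z (P.meet (P.bsim y (P.meet x y)) z) ∈ D → z ∈ D →
          P.bsim (P.sim y (P.bsim x (P.meet x y))) x ∈ D)) := by
  constructor
  · rintro ⟨hDS, hc1, hc2⟩
    refine ⟨hDS.1, ?_, ?_⟩
    · intro x y z h1 hz
      -- from z ∈ D and (a∧z)∼z ∈ D get a ∈ D with a = (x∧y)∼y
      have hmz : P.meet (P.sim (P.meet x y) y) z ∈ D := hDS.2.2 _ _ hz h1
      have ha : P.sim (P.meet x y) y ∈ D :=
        hDS.2.1 _ _ hmz (P.le_meet_left _ _)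
      exact hc1 x y ha
    · intro x y z h1 hz
      have hmz : P.meet (P.bsim y (P.meet x y)) z ∈ D :=
        P.bsim_mp D hDS _ _ hz h1
      have hb : P.bsim y (P.meet x y) ∈ D :=
        hDS.2.1 _ _ hmz (P.le_meet_left _ _)
      exact hc2 x y hb
  · rintro ⟨h1, h2, h3⟩
    -- derived rule: (x∧z)∼z ∈ D and z ∈ D imply x ∈ D
    have R : ∀ x z, P.sim (P.meet x z) z ∈ D → z ∈ D → x ∈ D := by
      intro x z hs hz
      have := h2 x P.one z
      rw [P.meet_one, P.sim_one, P.sim_self, P.bsim_self, P.sim_one] at this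
      exact this hs hz
    have hDS : P.IsDS D := by
      refine ⟨h1, hup, ?_⟩
      intro x y hx hs
      have h5 := P.A5a y x x
      rw [P.meet_idem] at h5
      have : P.sim (P.meet y x) x ∈ D := hup _ _ hs h5
      exact R y x this hx
    refine ⟨hDS, ?_, ?_⟩
    · intro x y ha
      have := h2 x y P.one
      rw [P.meet_one, P.sim_one] at this
      exact this ha h1
    · intro x y hb
      have := h3 x y P.one
      rw [P.meet_one, P.one_bsim] at this
      exact this hb h1
end

section
/- Let m be a measure on a pseudo equality algebra A. Then for all x, y ∈ A: m(x ∨₁ y) = m(y ∨₁ x), m(x ∨₂ y) = m(y ∨₂ x), and m(x ∨₁ y) = m(x ∨₂ y), where x ∨₁ y = (x∧y∼x)∽y and x ∨₂ y = y∼(x∽x∧y). -/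
theorem stmt14 {A : Type*} (P : PEA A) (m : A → ℝ) (hm : P.IsMeasure m)
    (x y : A) :
    m (P.v1 x y) = m (P.v1 y x) ∧ m (P.v2 x y) = m (P.v2 y x) ∧
    m (P.v1 x y) = m (P.v2 x y) := by
  obtain ⟨-, hM⟩ := hm
  have hle1 : ∀ u v : A, P.le (P.meet u v) u := by
    intro u v
    show P.meet (P.meet u v) u = P.meet u v
    rw [P.meet_comm (P.meet u v) u, ← P.meet_assoc, P.meet_idem]
  have P1 : ∀ u v : A, P.le u (P.sim (P.meet u v) v) := by
    intro u v
    have h := P.A5a u P.one v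
    rwa [P.sim_one, P.meet_comm P.one v, P.meet_one v] at h
  have P2 : ∀ u v : A, P.le u (P.bsim v (P.meet u v)) := by
    intro u v
    have h := P.A5b P.one u v
    rwa [P.one_bsim, P.meet_comm P.one v, P.meet_one v] at h
  have key1 : ∀ u v : A, m (P.v1 u v) = m v - m (P.meet u v) + m u := by
    intro u v
    have hva : P.le v (P.sim (P.meet u v) u) := by
      have := P1 v u; rwa [P.meet_comm v u] at this
    have h1 := (hM _ _ hva).2
    have h2 := (hM _ _ (hle1 u v)).1
    unfold PEA.v1
    rw [h1, h2]; ring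
  have key2 : ∀ u v : A, m (P.v2 u v) = m v - m (P.meet u v) + m u := by
    intro u v
    have hvb : P.le v (P.bsim u (P.meet u v)) := by
      have := P2 v u; rwa [P.meet_comm v u] at this
    have h1 := (hM _ _ hvb).1
    have h2 := (hM _ _ (hle1 u v)).2
    unfold PEA.v2
    rw [h1, h2]; ring
  rw [key1 x y, key1 y x, key2 x y, key2 y x, P.meet_comm y x]
  refine ⟨by ring, by ring, by ring⟩
end

section
/- The kernel of a measure m on a pseudo equality algebra A is a commutative deductive system of A. -/
namespace PEAaux

variable {A : Type*} (P : PEA A)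

lemma le_trans' {x y z : A} (h1 : P.le x y) (h2 : P.le y z) : P.le x z := by
  unfold PEA.le at *
  calc P.meet x z = P.meet (P.meet x y) z := by rw [h1]
    _ = P.meet x (P.meet y z) := P.meet_assoc ..
    _ = P.meet x y := by rw [h2]
    _ = x := h1

lemma meet_le_left (x y : A) : P.le (P.meet x y) x := by
  unfold PEA.le
  rw [P.meet_comm x y, P.meet_assoc, P.meet_idem]

lemma meet_le_right (x y : A) : P.le (P.meet x y) y := by
  unfold PEA.le
  rw [P.meet_assoc, P.meet_idem]

/-- y ≤ (x∧y) ∼ x -/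
lemma lem1 (x y : A) : P.le y (P.sim (P.meet x y) x) := by
  have h := P.A5a y P.one x
  rw [P.sim_one, P.meet_comm P.one x, P.meet_one, P.meet_comm y x] at h
  exact h

/-- y ≤ x ∽ (x∧y) -/
lemma lem2 (x y : A) : P.le y (P.bsim x (P.meet x y)) := by
  have h := P.A5b P.one y x
  rw [P.meet_comm P.one x, P.meet_one, P.meet_comm y x, P.one_bsim] at h
  exact h

/-- x ≤ ((x∧y)∼x) ∽ (x∧y) -/
lemma lem3 (x y : A) : P.le x (P.bsim (P.sim (P.meet x y) x) (P.meet x y)) := by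
  have h := P.A6a x P.one (P.meet x y)
  rw [P.sim_one, P.sim_one] at h
  exact h

/-- x ≤ ((x∧y)∼x) ∽ y -/
lemma lem4 (x y : A) : P.le x (P.bsim (P.sim (P.meet x y) x) y) := by
  refine le_trans' P (lem3 P x y) ?_
  exact P.A4c (P.meet x y) y (P.sim (P.meet x y) x) (meet_le_right P x y) (lem1 P x y)

/-- x ≤ (x∧y) ∼ (x ∽ (x∧y)) -/
lemma lem5 (x y : A) : P.le x (P.sim (P.meet x y) (P.bsim x (P.meet x y))) := by
  have h := P.A6b P.one x (P.meet x y)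
  rw [P.one_bsim, P.one_bsim] at h
  exact h

/-- x ≤ y ∼ (x ∽ (x∧y)) -/
lemma lem6 (x y : A) : P.le x (P.sim y (P.bsim x (P.meet x y))) := by
  refine le_trans' P (lem5 P x y) ?_
  exact P.A4a (P.meet x y) y (P.bsim x (P.meet x y)) (meet_le_right P x y) (lem2 P x y)

/-- y∼x ≤ (x∧y)∼x -/
lemma lem7 (x y : A) : P.le (P.sim y x) (P.sim (P.meet x y) x) := by
  have h := P.A5a y x x
  rw [P.meet_idem, P.meet_comm y x] at h
  exact h

end PEAaux

theorem stmt18 {A : Type*} (P : PEA A) (m : A → ℝ) (hm : P.IsMeasure m) :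
    P.IsCommDS {x | m x = 0} := by
  obtain ⟨hpos, hms⟩ := hm
  -- monotonicity of the measure
  have mono : ∀ a b : A, P.le a b → m b ≤ m a := by
    intro a b h
    have h1 := (hms b a h).1
    have h2 := hpos (P.sim a b)
    linarith
  -- m 1 = 0
  have mone : m P.one = 0 := by
    have h := (hms P.one P.one (P.meet_idem P.one)).1
    rw [P.sim_self] at h
    linarith
  refine ⟨⟨mone, ?_, ?_⟩, ?_, ?_⟩
  · -- upset
    intro x y hx hxy
    have h1 := mono x y hxy
    have h2 := hpos y
    simp only [Set.mem_setOf_eq] at hx ⊢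
    linarith
  · -- closure under sim
    intro x y hx hsim
    simp only [Set.mem_setOf_eq] at hx hsim ⊢
    have h1 := mono _ _ (PEAaux.lem7 P x y)
    rw [hsim] at h1
    have h2 := hpos (P.sim (P.meet x y) x)
    have h3 := (hms x (P.meet x y) (PEAaux.meet_le_left P x y)).1
    have h4 := mono _ _ (PEAaux.meet_le_right P x y)
    have h5 := hpos y
    linarith
  · -- first commutativity condition
    intro x y hx
    simp only [Set.mem_setOf_eq] at hx ⊢
    -- hx : m ((x∧y)∼y) = 0
    have h0 := (hms y (P.meet x y) (PEAaux.meet_le_right P x y)).1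
    -- m ((x∧y)∼x) = m (x∧y) - m x
    have h1 := (hms x (P.meet x y) (PEAaux.meet_le_left P x y)).1
    -- m (((x∧y)∼x) ∽ y) = m y - m ((x∧y)∼x)
    have h2 := (hms (P.sim (P.meet x y) x) y (PEAaux.lem1 P x y)).2
    -- m (x ∼ u) = m x - m u where u = ((x∧y)∼x) ∽ y
    have h3 := (hms (P.bsim (P.sim (P.meet x y) x) y) x (PEAaux.lem4 P x y)).1
    linarith
  · -- second commutativity condition
    intro x y hx
    simp only [Set.mem_setOf_eq] at hx ⊢
    -- hx : m (y ∽ (x∧y)) = 0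
    have h0 := (hms y (P.meet x y) (PEAaux.meet_le_right P x y)).2
    -- m (x ∽ (x∧y)) = m (x∧y) - m x
    have h1 := (hms x (P.meet x y) (PEAaux.meet_le_left P x y)).2
    -- m (y ∼ (x ∽ (x∧y))) = m y - m (x ∽ (x∧y))
    have h2 := (hms (P.bsim x (P.meet x y)) y (PEAaux.lem2 P x y)).1
    -- m (v ∽ x) = m x - m v where v = y ∼ (x ∽ (x∧y))
    have h3 := (hms (P.sim y (P.bsim x (P.meet x y))) x (PEAaux.lem6 P x y)).2
    linarith
end

section
/- If a pseudo equality algebra A possesses an order-determining system S of measures (i.e., for all x, y ∈ A, if m(x) ≥ m(y) for all m ∈ S, then x ≤ y), then A is commutative. -/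
namespace PEA
variable {A : Type*} (P : PEA A)

lemma meet_le_left' (x y : A) : P.le (P.meet x y) x := by
  unfold le
  rw [P.meet_comm, ← P.meet_assoc, P.meet_idem]

lemma le_sim_meet (x y : A) : P.le y (P.sim (P.meet x y) x) := by
  have h := P.A5a y P.one x
  rw [P.sim_one, P.meet_comm P.one x, P.meet_one, P.meet_comm y x] at h
  exact h

lemma le_bsim_meet (x y : A) : P.le y (P.bsim x (P.meet x y)) := by
  have h := P.A5b P.one y x
  rw [P.one_bsim, P.meet_comm P.one x, P.meet_one, P.meet_comm y x] at h
  exact h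

lemma le_antisymm' {x y : A} (h1 : P.le x y) (h2 : P.le y x) : x = y := by
  unfold le at h1 h2
  rw [← h1, P.meet_comm, h2]

end PEA

theorem stmt19 {A : Type*} (P : PEA A) (S : Set (A → ℝ))
    (hS : ∀ m ∈ S, P.IsMeasure m)
    (hdet : ∀ x y, (∀ m ∈ S, m y ≤ m x) → P.le x y) :
    P.Commutative := by
  intro x y
  set a := P.meet x y with ha
  have hax : P.le a x := P.meet_le_left' x y
  have hay : P.le a y := P.meet_le_right' x y
  -- measure values
  have key1 : ∀ m ∈ S, m (P.bsim (P.sim a x) y) = m (P.bsim (P.sim a y) x) := by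
    intro m hm
    obtain ⟨_, hm2⟩ := hS m hm
    have e1 : m (P.sim a x) = m a - m x := (hm2 x a hax).1
    have e2 : m (P.sim a y) = m a - m y := (hm2 y a hay).1
    have l1 : P.le y (P.sim a x) := P.le_sim_meet x y
    have l2 : P.le x (P.sim a y) := by
      have := P.le_sim_meet y x
      rwa [P.meet_comm y x] at this
    have f1 : m (P.bsim (P.sim a x) y) = m y - m (P.sim a x) :=
      (hm2 (P.sim a x) y l1).2
    have f2 : m (P.bsim (P.sim a y) x) = m x - m (P.sim a y) :=
      (hm2 (P.sim a y) x l2).2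
    rw [f1, f2, e1, e2]; ring
  have key2 : ∀ m ∈ S, m (P.sim y (P.bsim x a)) = m (P.sim x (P.bsim y a)) := by
    intro m hm
    obtain ⟨_, hm2⟩ := hS m hm
    have e1 : m (P.bsim x a) = m a - m x := (hm2 x a hax).2
    have e2 : m (P.bsim y a) = m a - m y := (hm2 y a hay).2
    have l1 : P.le y (P.bsim x a) := P.le_bsim_meet x y
    have l2 : P.le x (P.bsim y a) := by
      have := P.le_bsim_meet y x
      rwa [P.meet_comm y x] at this
    have f1 : m (P.sim y (P.bsim x a)) = m y - m (P.bsim x a) :=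
      (hm2 (P.bsim x a) y l1).1
    have f2 : m (P.sim x (P.bsim y a)) = m x - m (P.bsim y a) :=
      (hm2 (P.bsim y a) x l2).1
    rw [f1, f2, e1, e2]; ring
  constructor
  · exact P.le_antisymm'
      (hdet _ _ (fun m hm => le_of_eq (key1 m hm).symm))
      (hdet _ _ (fun m hm => le_of_eq (key1 m hm)))
  · exact P.le_antisymm'
      (hdet _ _ (fun m hm => le_of_eq (key2 m hm).symm))
      (hdet _ _ (fun m hm => le_of_eq (key2 m hm)))
end
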